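/- Let L ≥ 1 and for ℓ ∈ [L] define intervals J_{ℓ,u} = (2^{-ℓ-1}(u-1), 2^{-ℓ-1}(u+1)] for u ∈ {1,…,2^{ℓ+1}-1}, and bins I_{ℓ,m} = ((m-1)/2^{ℓ+1}, m/2^{ℓ+1}] for m ∈ {1,…,2^{ℓ+1}}. If f : [0,1] → [0,1] is 1-Lipschitz and f(I_{ℓ,m}) ⊆ J_{ℓ,u}, then for any m' ∈ {2m-1, 2m} there exists u' ∈ {2u-1, 2u, 2u+1} such that f(I_{ℓ+1,m'}) ⊆ J_{ℓ+1,u'}. -/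
import Mathlib


/-- Overlapping dyadic interval `J_{ℓ,u} = (2^{-ℓ-1}(u-1), 2^{-ℓ-1}(u+1)]`. -/
noncomputable def Jint (ℓ u : ℕ) : Set ℝ :=
  Set.Ioc (((u:ℝ) - 1) / 2 ^ (ℓ + 1)) (((u:ℝ) + 1) / 2 ^ (ℓ + 1))

/-- Dyadic bin `I_{ℓ,m} = ((m-1)/2^{ℓ+1}, m/2^{ℓ+1}]`. -/
noncomputable def Ibin (ℓ m : ℕ) : Set ℝ :=
  Set.Ioc (((m:ℝ) - 1) / 2 ^ (ℓ + 1)) ((m:ℝ) / 2 ^ (ℓ + 1))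

theorem employee_covering
    (L ℓ : ℕ) (hℓ : 1 ≤ ℓ) (hℓL : ℓ ≤ L)
    (m u : ℕ) (hm : 1 ≤ m) (hm' : m ≤ 2 ^ (ℓ + 1))
    (hu : 1 ≤ u) (hu' : u ≤ 2 ^ (ℓ + 1) - 1)
    (f : ℝ → ℝ)
    (hmap : ∀ v ∈ Set.Icc (0:ℝ) 1, f v ∈ Set.Icc (0:ℝ) 1)
    (hlip : ∀ v ∈ Set.Icc (0:ℝ) 1, ∀ v' ∈ Set.Icc (0:ℝ) 1, |f v - f v'| ≤ |v - v'|)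
    (hIJ : ∀ v ∈ Ibin ℓ m ∩ Set.Icc (0:ℝ) 1, f v ∈ Jint ℓ u)
    (m' : ℕ) (hm'' : m' = 2*m - 1 ∨ m' = 2*m) :
    ∃ u' ∈ ({2*u - 1, 2*u, 2*u + 1} : Set ℕ),
      ∀ v ∈ Ibin (ℓ + 1) m' ∩ Set.Icc (0:ℝ) 1, f v ∈ Jint (ℓ + 1) u' := by
  have hd0 : (0:ℝ) < 2 ^ (ℓ + 2) := by positivity
  have hD0 : (0:ℝ) < 2 ^ (ℓ + 1) := by positivity
  have hpow : (2:ℝ) ^ (ℓ + 2) = 2 * 2 ^ (ℓ + 1) := by ring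
  -- cast of m'
  have hmcast : (m' : ℝ) = 2 * m - 1 ∨ (m' : ℝ) = 2 * m := by
    rcases hm'' with h | h
    · left
      have : 1 ≤ 2 * m := by omega
      rw [h]
      push_cast [this]
      ring
    · right; rw [h]; push_cast; ring
  -- sub-bin is inside the bin
  have hsub : Ibin (ℓ+1) m' ∩ Set.Icc (0:ℝ) 1 ⊆ Ibin ℓ m ∩ Set.Icc (0:ℝ) 1 := by
    intro v hv
    obtain ⟨⟨h1, h2⟩, hv01⟩ := hv
    refine ⟨⟨?_, ?_⟩, hv01⟩
    · rcases hmcast with h | h <;>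
      · rw [div_lt_iff₀ hD0]
        rw [div_lt_iff₀ hd0, h] at h1
        nlinarith
    · rcases hmcast with h | h <;>
      · rw [le_div_iff₀ hD0]
        rw [le_div_iff₀ hd0, h] at h2
        nlinarith
  -- image facts
  have hJ : ∀ v ∈ Ibin (ℓ+1) m' ∩ Set.Icc (0:ℝ) 1,
      ((2*u:ℝ) - 2) / 2 ^ (ℓ+2) < f v ∧ f v ≤ ((2*u:ℝ) + 2) / 2 ^ (ℓ+2) := by
    intro v hv
    obtain ⟨ha, hb⟩ := hIJ v (hsub hv)
    constructor
    · rw [div_lt_iff₀ hd0]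
      rw [div_lt_iff₀ hD0] at ha
      nlinarith
    · rw [le_div_iff₀ hd0]
      rw [le_div_iff₀ hD0] at hb
      nlinarith
  -- diameter bound
  have hdiam : ∀ v ∈ Ibin (ℓ+1) m' ∩ Set.Icc (0:ℝ) 1,
      ∀ v' ∈ Ibin (ℓ+1) m' ∩ Set.Icc (0:ℝ) 1,
      f v - f v' < 1 / 2 ^ (ℓ+2) := by
    intro v hv v' hv'
    have hl := hlip v hv.2 v' hv'.2
    obtain ⟨⟨h1, h2⟩, _⟩ := hv
    obtain ⟨⟨h1', h2'⟩, _⟩ := hv'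
    have he : (2:ℝ) ^ (ℓ+1+1) = 2 ^ (ℓ+2) := rfl
    rw [he] at h1 h2 h1' h2'
    have hvv : |v - v'| < 1 / 2 ^ (ℓ+2) := by
      rw [abs_sub_lt_iff]
      constructor
      · rw [lt_div_iff₀ hd0]
        rw [div_lt_iff₀ hd0] at h1'
        rw [le_div_iff₀ hd0] at h2
        nlinarith
      · rw [lt_div_iff₀ hd0]
        rw [div_lt_iff₀ hd0] at h1
        rw [le_div_iff₀ hd0] at h2'
        nlinarith
    calc f v - f v' ≤ |f v - f v'| := le_abs_self _
      _ ≤ |v - v'| := hl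
      _ < 1 / 2 ^ (ℓ+2) := hvv
  by_cases h1 : ∀ v ∈ Ibin (ℓ+1) m' ∩ Set.Icc (0:ℝ) 1, f v ≤ (2*u:ℝ) / 2 ^ (ℓ+2)
  · refine ⟨2*u - 1, by simp, ?_⟩
    intro v hv
    have hcast : ((2*u - 1 : ℕ) : ℝ) = 2*u - 1 := by
      have : 1 ≤ 2*u := by omega
      push_cast [this]; ring
    obtain ⟨hJ1, hJ2⟩ := hJ v hv
    refine ⟨?_, ?_⟩
    · rw [hcast]
      have : ((2*u:ℝ) - 1 - 1) = (2*u:ℝ) - 2 := by ring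
      rw [this]
      exact hJ1
    · rw [hcast]
      have : ((2*u:ℝ) - 1 + 1) = (2*u:ℝ) := by ring
      rw [this]
      exact h1 v hv
  · push_neg at h1
    obtain ⟨x, hx, hfx⟩ := h1
    by_cases h2 : ∀ v ∈ Ibin (ℓ+1) m' ∩ Set.Icc (0:ℝ) 1, f v ≤ ((2*u:ℝ) + 1) / 2 ^ (ℓ+2)
    · refine ⟨2*u, by simp, ?_⟩
      intro v hv
      refine ⟨?_, ?_⟩
      · push_cast
        have hd := hdiam x hx v hv
        rw [div_lt_iff₀ hd0]
        rw [div_lt_iff₀ hd0] at hfx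
        rw [lt_div_iff₀ hd0] at hd
        nlinarith
      · push_cast
        exact h2 v hv
    · push_neg at h2
      obtain ⟨y, hy, hfy⟩ := h2
      refine ⟨2*u + 1, by simp, ?_⟩
      intro v hv
      refine ⟨?_, ?_⟩
      · push_cast
        have hd := hdiam y hy v hv
        have hgoal : ((2*u:ℝ) + 1 - 1) = (2*u:ℝ) := by ring
        rw [hgoal, div_lt_iff₀ hd0]
        rw [div_lt_iff₀ hd0] at hfy
        rw [lt_div_iff₀ hd0] at hd
        nlinarith
      · push_cast
        have hgoal : ((2*u:ℝ) + 1 + 1) = (2*u:ℝ) + 2 := by ring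
        rw [hgoal]
        exact (hJ v hv).2
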